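/- arXiv:2602.02201 — 4 statements merged into one kernel-verified Lean document; each statement's English description precedes it below -/
import Mathlib

section
/- Let d ≥ 1 and let S, S' be finite index sets with value assignments v : S → ℝ^d, v' : S' → ℝ^d and attention weights α : S → ℝ, α' : S' → ℝ. Suppose: (C1) there is a nonempty finite multiset B in ℝ^d and positive naturals λ ≠ λ' such that the multiset image of v is the λ-fold replication of B and the multiset image of v' is the λ'-fold replication of B; (C2) for every b ∈ ℝ^d, ∑_{j ∈ S, v j = b} α j = ∑_{j' ∈ S', v' j' = b} α' j'; and there is a gate vector g ∈ ℝ^d and a coordinate r ∈ {1,…,d} with g_r > 0 and (∑_{b ∈ B} b)_r ≠ 0. Then the CPA outputs differ: (∑_{j ∈ S} α j • v j) + g ⊙ (∑_{j ∈ S} v j) ≠ (∑_{j' ∈ S'} α' j' • v' j') + g ⊙ (∑_{j' ∈ S'} v' j'), where ⊙ denotes the coordinatewise (Hadamard) product. That is, the cardinality-preserving attention channel distinguishes the two supports even though pure softmax attention cannot. -/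
lemma cpa_aux_weighted {d : ℕ} {κ : Type*} [DecidableEq κ]
    (T : Finset κ) (w : κ → Fin d → ℝ) (a : κ → ℝ)
    (B : Multiset (Fin d → ℝ)) (n : ℕ) (hn : n ≠ 0)
    (hT : T.val.map w = n • B) :
    ∑ j ∈ T, a j • w j
      = ∑ b ∈ B.toFinset, (∑ j ∈ T.filter (fun j => w j = b), a j) • b := by
  have hmaps : ∀ j ∈ T, w j ∈ B.toFinset := by
    intro j hj
    have : w j ∈ T.val.map w := Multiset.mem_map_of_mem w hj
    rw [hT] at this
    exact Multiset.mem_toFinset.mpr ((Multiset.mem_nsmul.mp this).2)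
  rw [← Finset.sum_fiberwise_of_maps_to hmaps (fun j => a j • w j)]
  refine Finset.sum_congr rfl fun b _ => ?_
  rw [Finset.sum_smul]
  refine Finset.sum_congr rfl fun j hj => ?_
  rw [(Finset.mem_filter.mp hj).2]

lemma cpa_aux_sum {d : ℕ} {κ : Type*} [DecidableEq κ]
    (T : Finset κ) (w : κ → Fin d → ℝ)
    (B : Multiset (Fin d → ℝ)) (n : ℕ)
    (hT : T.val.map w = n • B) :
    ∑ j ∈ T, w j = n • B.sum := by
  rw [Finset.sum, hT]
  clear hT
  induction n with
  | zero => simp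
  | succ k ih => rw [succ_nsmul, succ_nsmul, Multiset.sum_add, ih]

/-- **CPA Resolves Cardinality Blindness** (Proposition 2).
Under (C1) (the value multisets are `λ`- and `λ'`-fold replications of a common
nonempty base multiset `B`, with `λ ≠ λ'`), (C2) (matched per-value attention mass),
(C3)/(C4) (a coordinate `r` with positive gate `g r > 0` and nonzero base-sum
coordinate `(B.sum) r ≠ 0`), the CPA-augmented outputs
`(∑ α_j • v_j) + g ⊙ (∑ v_j)` of the two supports differ, where `⊙` is the
coordinatewise (Hadamard) product. -/
theorem cpa_resolves_cardinality_blindness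
    (d : ℕ) (hd : 1 ≤ d) {ι ι' : Type*} [DecidableEq ι] [DecidableEq ι']
    (S : Finset ι) (S' : Finset ι')
    (v : ι → (Fin d → ℝ)) (v' : ι' → (Fin d → ℝ))
    (α : ι → ℝ) (α' : ι' → ℝ)
    (B : Multiset (Fin d → ℝ)) (hB : B ≠ 0)
    (lam lam' : ℕ) (hlam : 1 ≤ lam) (hlam' : 1 ≤ lam') (hne : lam ≠ lam')
    (hC1 : S.val.map v = lam • B ∧ S'.val.map v' = lam' • B)
    (hC2 : ∀ b : Fin d → ℝ,
      ∑ j ∈ S.filter (fun j => v j = b), α j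
        = ∑ j' ∈ S'.filter (fun j' => v' j' = b), α' j')
    (g : Fin d → ℝ) (r : Fin d)
    (hg : 0 < g r) (hBr : B.sum r ≠ 0) :
    (∑ j ∈ S, α j • v j) + g * (∑ j ∈ S, v j)
      ≠ (∑ j' ∈ S', α' j' • v' j') + g * (∑ j' ∈ S', v' j') := by
  obtain ⟨h1, h2⟩ := hC1
  have hsoft : (∑ j ∈ S, α j • v j) = ∑ j' ∈ S', α' j' • v' j' := by
    rw [cpa_aux_weighted S v α B lam (by omega) h1,
        cpa_aux_weighted S' v' α' B lam' (by omega) h2]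
    exact Finset.sum_congr rfl fun b _ => by rw [hC2 b]
  intro h
  rw [hsoft] at h
  have h' := add_left_cancel h
  have hr := congrFun h' r
  simp only [Pi.mul_apply, cpa_aux_sum S v B lam h1, cpa_aux_sum S' v' B lam' h2,
    Pi.smul_apply, smul_eq_mul] at hr
  have h3 := mul_left_cancel₀ (ne_of_gt hg) hr
  rw [nsmul_eq_mul, nsmul_eq_mul] at h3
  have := mul_right_cancel₀ hBr h3
  exact hne (Nat.cast_injective this)
end

section
/- Let X be a countable type. Then there exists a function φ : X → ℝ such that the map sending each finite multiset M over X to the real number ∑_{x ∈ M} φ(x) (sum counted with multiplicity) is injective on the collection of all finite multisets over X. That is, distinct finite multisets over X are mapped to distinct sums. -/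
open Polynomial

lemma coeff_multiset_sum_X_pow (M : Multiset ℕ) (k : ℕ) :
    ((M.map (fun n => (X : ℤ[X]) ^ n)).sum).coeff k = M.count k := by
  induction M using Multiset.induction with
  | empty => simp
  | cons a M ih =>
      simp only [Multiset.map_cons, Multiset.sum_cons, Polynomial.coeff_add,
        Polynomial.coeff_X_pow, ih, Multiset.count_cons]
      by_cases h : a = k <;> simp [h, eq_comm, add_comm]

/-- **Injective multiset-sum embedding over a countable domain**
(Xu et al., Lemma 5; Step 2 of Theorem 3). For any countable type `X`, there is
a feature map `φ : X → ℝ` such that the sum aggregation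
`M ↦ ∑_{x ∈ M} φ x` (with multiplicity) is injective on finite multisets over `X`. -/
theorem exists_injective_multiset_sum (X : Type*) [Countable X] :
    ∃ φ : X → ℝ,
      Function.Injective (fun M : Multiset X => (M.map φ).sum) := by
  obtain ⟨f, hf⟩ := Countable.exists_injective_nat X
  set r := liouvilleNumber 3 with hr
  have htr : Transcendental ℤ r := transcendental_liouvilleNumber (by norm_num)
  refine ⟨fun x => r ^ (f x), fun M N h => ?_⟩
  simp only at h
  set pM : ℤ[X] := ((M.map f).map (fun n => (Polynomial.X : ℤ[X]) ^ n)).sum with hpM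
  set pN : ℤ[X] := ((N.map f).map (fun n => (Polynomial.X : ℤ[X]) ^ n)).sum with hpN
  have haeval : ∀ (K : Multiset X),
      (Polynomial.aeval r) (((K.map f).map (fun n => (Polynomial.X : ℤ[X]) ^ n)).sum)
        = (K.map (fun x => r ^ (f x))).sum := by
    intro K
    rw [map_multiset_sum, Multiset.map_map, Multiset.map_map]
    congr 1
    ext x
    simp
  have heq : pM = pN := by
    by_contra hne
    exact htr ⟨pM - pN, sub_ne_zero.mpr hne, by
      rw [map_sub, hpM, hpN, haeval, haeval, h, sub_self]⟩
  have : M.map f = N.map f := by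
    ext k
    have hc := congrArg (fun p => Polynomial.coeff p k) heq
    simp only [hpM, hpN, coeff_multiset_sum_X_pow] at hc
    exact_mod_cast hc
  exact Multiset.map_injective hf this
end

section
/- Let X be a countable type, D ≥ 1, and let g ∈ ℝ^D have every coordinate strictly positive. Then there exist a function φ : X → ℝ^D and a real number ε > 0 such that the map h sending a pair (x, M) — where x ∈ X and M is a finite multiset over X — to h(x, M) = (1 + ε) • φ(x) + g ⊙ (∑_{m ∈ M} φ(m)) ∈ ℝ^D is injective on X × {finite multisets over X}. Consequently, for any injective ψ : ℝ^D → ℝ^{D'}, the composed aggregation (x, M) ↦ ψ(h(x, M)) is an injective function of the pair consisting of the center element and the neighbor multiset. -/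
/-!
Pick a ℚ-linearly independent family `B : X → ℝ` (a countable part of a Hamel basis) and the
constant features `φ x = B x / c`, where `c > 0` is one coordinate of the gate. In that
coordinate the aggregation equals `q • B x + ∑_{m ∈ M} B m` with `q = (1 + ε) / c`. Choosing `ε`
so that `q` is a rational that is not an integer, the coefficient vector `q · [x] + 𝟙_M` can be
read off by linear independence, and it determines `x` (the only coefficient outside `ℕ`) and
then `M`.
-/

open Function

theorem exists_linearIndependent_rat_real (X : Type*) [Countable X] :
    ∃ B : X → ℝ, LinearIndependent ℚ B := by
  have hrank : Cardinal.aleph0 ≤ Module.rank ℚ ℝ :=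
    Real.rank_rat_real ▸ Cardinal.aleph0_le_continuum
  obtain ⟨s, hs, hli⟩ := le_rank_iff_exists_linearIndependent.mp hrank
  obtain ⟨f⟩ : Nonempty (s ≃ ℕ) := Cardinal.eq.mp (hs.trans Cardinal.mk_nat.symm)
  obtain ⟨e, he⟩ := Countable.exists_injective_nat X
  exact ⟨fun x => f.symm (e x), hli.comp _ (f.symm.injective.comp he)⟩

theorem Multiset.linearCombination_toFinsupp {K V ι : Type*} [Semiring K] [AddCommMonoid V]
    [Module K V] [DecidableEq ι] (B : ι → V) (M : Multiset ι) :
    Finsupp.linearCombination K B (M.toFinsupp.mapRange Nat.cast Nat.cast_zero) =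
      (M.map B).sum := by
  induction M using Multiset.induction_on with
  | empty => simp
  | cons a M ih =>
    rw [← Multiset.singleton_add, Multiset.toFinsupp_add, Finsupp.mapRange_add Nat.cast_add,
      _root_.map_add, ih, Multiset.toFinsupp_singleton]
    simp

theorem LinearIndependent.injective_smul_add_sum_map {K V ι : Type*} [Ring K] [CharZero K]
    [AddCommGroup V] [Module K V] {B : ι → V} (hB : LinearIndependent K B) {q : K}
    (hq : ∀ n : ℤ, (n : K) ≠ q) :
    Injective fun p : ι × Multiset ι => q • B p.1 + (p.2.map B).sum := by
  classical
  rintro ⟨x₁, M₁⟩ ⟨x₂, M₂⟩ h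
  have hcoeff : ∀ y, (if x₁ = y then q else 0) + (M₁.count y : K)
      = (if x₂ = y then q else 0) + (M₂.count y : K) := by
    have := @hB (Finsupp.single x₁ q + M₁.toFinsupp.mapRange Nat.cast Nat.cast_zero)
      (Finsupp.single x₂ q + M₂.toFinsupp.mapRange Nat.cast Nat.cast_zero) (by
        simpa only [map_add, Finsupp.linearCombination_single, Multiset.linearCombination_toFinsupp]
          using h)
    intro y
    simpa [Finsupp.single_apply] using DFunLike.congr_fun this y
  obtain rfl : x₁ = x₂ := by
    by_contra hx
    refine hq ((M₂.count x₁ : ℤ) - M₁.count x₁) ?_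
    have := hcoeff x₁
    rw [if_pos rfl, if_neg (Ne.symm hx), zero_add] at this
    push_cast
    rw [sub_eq_iff_eq_add, ← this]
  obtain rfl : M₁ = M₂ :=
    Multiset.ext.mpr fun y => by exact_mod_cast add_left_cancel (hcoeff y)
  rfl

theorem exists_rat_gt_ne_intCast (a : ℝ) : ∃ q : ℚ, a < q ∧ ∀ n : ℤ, (n : ℚ) ≠ q := by
  refine ⟨⌈a⌉ + 1 / 2, ?_, fun n hn => ?_⟩
  · push_cast
    linarith [Int.le_ceil a]
  · have hodd : (2 * n : ℚ) = 2 * ⌈a⌉ + 1 := by rw [hn]; ring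
    have : 2 * n = 2 * ⌈a⌉ + 1 := by exact_mod_cast hodd
    omega

/-- **CPA-augmented aggregation has 1-WL capacity** (core of Theorem 3).
Over a countable domain `X` and with a strictly positive gate `g ∈ ℝ^D`, there
exist a feature map `φ : X → ℝ^D` and `ε > 0` such that the gated aggregation
`h (x, M) = (1+ε) • φ x + g ⊙ ∑_{m ∈ M} φ m` is an injective function of the pair
(center element, neighbor multiset); consequently composing with any injective
`ψ : ℝ^D → ℝ^{D'}` keeps the aggregation injective. -/
theorem cpa_one_wl_capacity
    (X : Type*) [Countable X] (D : ℕ) (hD : 1 ≤ D)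
    (g : Fin D → ℝ) (hg : ∀ r, 0 < g r) :
    ∃ (φ : X → (Fin D → ℝ)) (ε : ℝ), 0 < ε ∧
      Function.Injective
        (fun p : X × Multiset X =>
          (1 + ε) • φ p.1 + g * (p.2.map φ).sum) ∧
      ∀ (D' : ℕ) (ψ : (Fin D → ℝ) → (Fin D' → ℝ)), Function.Injective ψ →
        Function.Injective
          (fun p : X × Multiset X =>
            ψ ((1 + ε) • φ p.1 + g * (p.2.map φ).sum)) := by
  obtain ⟨B, hB⟩ := exists_linearIndependent_rat_real X
  set r₀ : Fin D := ⟨0, hD⟩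
  have hc : 0 < g r₀ := hg r₀
  obtain ⟨q, hqc, hq⟩ := exists_rat_gt_ne_intCast (g r₀)⁻¹
  set φ : X → Fin D → ℝ := fun x _ => B x / g r₀
  set ε : ℝ := q * g r₀ - 1 with hε
  have hcoord : ∀ p : X × Multiset X,
      ((1 + ε) • φ p.1 + g * (p.2.map φ).sum) r₀ = q • B p.1 + (p.2.map B).sum := by
    intro p
    simp only [Pi.add_apply, Pi.smul_apply, Pi.mul_apply, Pi.multiset_sum_apply,
      Multiset.map_map, comp_def, φ, hε, Multiset.sum_map_div, Rat.smul_def, smul_eq_mul]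
    field_simp
    ring
  have hinj : Injective fun p : X × Multiset X => (1 + ε) • φ p.1 + g * (p.2.map φ).sum :=
    fun p₁ p₂ h => hB.injective_smul_add_sum_map hq <| by
      simpa only [hcoord] using congrFun h r₀
  refine ⟨φ, ε, ?_, hinj, fun D' ψ hψ => hψ.comp hinj⟩
  linarith [(inv_lt_iff_one_lt_mul₀ hc).mp hqc]
end

section
/- Let d ≥ 1 and let S, S' be finite nonempty index sets with value assignments v : S → ℝ^d and v' : S' → ℝ^d whose value multisets have equal means: (1/|S|) • ∑_{j ∈ S} v j = (1/|S'|) • ∑_{j' ∈ S'} v' j'. Let α : S → ℝ and α' : S' → ℝ be attention weights satisfying the matched per-value-mass condition: for every b ∈ ℝ^d, ∑_{j ∈ S, v j = b} α j = ∑_{j' ∈ S', v' j' = b} α' j'. Then for any common gate vector g ∈ ℝ^d, the degree-normalized CPA outputs coincide: (∑_{j ∈ S} α j • v j) + g ⊙ ((1/|S|) • ∑_{j ∈ S} v j) = (∑_{j' ∈ S'} α' j' • v' j') + g ⊙ ((1/|S'|) • ∑_{j' ∈ S'} v' j'). In particular degree-normalized CPA fails to distinguish supports whose value multisets differ but share the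 same mean. -/
lemma fiber_sum_smul {ι : Type*} [DecidableEq ι] {d : ℕ}
    (S : Finset ι) (v : ι → (Fin d → ℝ)) (α : ι → ℝ)
    (T : Finset (Fin d → ℝ)) (hT : S.image v ⊆ T) :
    ∑ j ∈ S, α j • v j
      = ∑ b ∈ T, (∑ j ∈ S.filter (fun j => v j = b), α j) • b := by
  classical
  have h := Finset.sum_fiberwise_of_maps_to (s := S) (t := T) (g := v)
      (fun j hj => hT (Finset.mem_image_of_mem v hj)) (fun j => α j • v j)
  rw [← h]
  refine Finset.sum_congr rfl (fun b _ => ?_)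
  rw [Finset.sum_smul]
  refine Finset.sum_congr rfl (fun j hj => ?_)
  rw [(Finset.mem_filter.mp hj).2]

/-- **Degree-normalized CPA is cardinality-blind** (Corollary combined with
Proposition 1). If two nonempty supports have value multisets with equal means and
their attention weights have matched per-value mass (C2), then for any common gate
`g` the degree-normalized CPA outputs
`(∑ α_j • v_j) + g ⊙ ((1/|S|) • ∑ v_j)` coincide. -/
theorem degree_normalized_cpa_blind
    (d : ℕ) (hd : 1 ≤ d) {ι ι' : Type*} [DecidableEq ι] [DecidableEq ι']
    (S : Finset ι) (S' : Finset ι') (hS : S.Nonempty) (hS' : S'.Nonempty)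
    (v : ι → (Fin d → ℝ)) (v' : ι' → (Fin d → ℝ))
    (α : ι → ℝ) (α' : ι' → ℝ)
    (hmean : (1 / (S.card : ℝ)) • ∑ j ∈ S, v j
      = (1 / (S'.card : ℝ)) • ∑ j' ∈ S', v' j')
    (hC2 : ∀ b : Fin d → ℝ,
      ∑ j ∈ S.filter (fun j => v j = b), α j
        = ∑ j' ∈ S'.filter (fun j' => v' j' = b), α' j')
    (g : Fin d → ℝ) :
    (∑ j ∈ S, α j • v j) + g * ((1 / (S.card : ℝ)) • ∑ j ∈ S, v j)
      = (∑ j' ∈ S', α' j' • v' j') + g * ((1 / (S'.card : ℝ)) • ∑ j' ∈ S', v' j') := by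
  classical
  have hatt : ∑ j ∈ S, α j • v j = ∑ j' ∈ S', α' j' • v' j' := by
    rw [fiber_sum_smul S v α (S.image v ∪ S'.image v') Finset.subset_union_left,
        fiber_sum_smul S' v' α' (S.image v ∪ S'.image v') Finset.subset_union_right]
    exact Finset.sum_congr rfl (fun b _ => by rw [hC2 b])
  rw [hatt, hmean]
end
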